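/- There is no cohomology-free vector c = (c_1,c_2,c_3,c_4,c_5) ∈ ℤ⁵ with c_5 = 3. -/

import Mathlib

/-- The primitive ray generators `l₁,…,l₇` of the fan, in counterclockwise order,
acting on `ℤ²` by the dot product. -/
def rayForm : Fin 7 → ℤ × ℤ :=
  ![(1, -1), (2, -1), (3, -1), (1, 0), (0, 1), (-1, 2), (0, -1)]

/-- Extend `c ∈ ℤ⁵` to seven coefficients by `c₆ = c₇ = 0`. -/
def cExt (c : Fin 5 → ℤ) : Fin 7 → ℤ :=
  fun i => if h : (i : ℕ) < 5 then c ⟨i, h⟩ else 0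

/-- `N_c(m) = {i : l_i(m) + c_i < 0}`. -/
def Nset (c : Fin 5 → ℤ) (m : ℤ × ℤ) : Finset (Fin 7) :=
  Finset.univ.filter fun i =>
    (rayForm i).1 * m.1 + (rayForm i).2 * m.2 + cExt c i < 0

open Fin.NatCast in
/-- A subset of the cyclic index set `Fin 7` is a circular interval if it is empty
or of the form `{a, a+1, …, b}` with indices taken modulo 7. -/
def IsCircularInterval (S : Finset (Fin 7)) : Prop :=
  S = ∅ ∨ ∃ (a : Fin 7) (n : ℕ),
    S = (Finset.range (n + 1)).image fun j : ℕ => a + (j : Fin 7)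

/-- `c ∈ ℤ⁵` is cohomology-free if for every `m ∈ ℤ²` and both `ε ∈ {1, -1}`,
the set `N_{εc}(m)` is a circular interval different from the whole index set. (Indices here are the paper's, from 1; in Lean they are `Fin 7`, from 0.) -/
def CohomologyFree (c : Fin 5 → ℤ) : Prop :=
  ∀ m : ℤ × ℤ, ∀ ε : ℤ, ε = 1 ∨ ε = -1 →
    IsCircularInterval (Nset (ε • c) m) ∧ Nset (ε • c) m ≠ Finset.univ

/-! With `ε = -1`, at `m = (4, 2)` the set `N_{-c}(m)` contains the indices 5 and 7 (the former
because `c₅ = 3`) but not 6, so being a circular interval short of everything it is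
`{1, …, 7} \ {6}`. This forces `c₁ > 2`, `c₂ > 6`, `c₃ > 10`, `c₄ > 4`, and these bounds make
`N_{-c}(3, 1)` the whole index set. (Indices here are the paper's, from 1; in Lean they are
`Fin 7`, from 0.) -/

open Fin.NatCast in
lemma Fin.image_range_add_eq_univ {k n : ℕ} (a : Fin (k + 1)) (hn : k ≤ n) :
    (Finset.range (n + 1)).image (fun j : ℕ => a + (j : Fin (k + 1))) = Finset.univ := by
  refine Finset.eq_univ_of_forall fun x => Finset.mem_image.mpr ⟨(x - a : Fin (k + 1)), ?_, ?_⟩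
  · have := (x - a).isLt
    rw [Finset.mem_range]
    omega
  · rw [Fin.cast_val_eq_self, add_sub_cancel]

theorem IsCircularInterval.eq_erase_of_gap {S : Finset (Fin 7)} (hS : IsCircularInterval S)
    (hne : S ≠ Finset.univ) {j : Fin 7} (hprev : j - 1 ∈ S) (hnext : j + 1 ∈ S) (hj : j ∉ S) :
    S = Finset.univ.erase j := by
  rcases hS with rfl | ⟨a, n, rfl⟩
  · simp at hprev
  · obtain hn | hn := le_or_gt n 5
    · interval_cases n <;> fin_cases a <;> fin_cases j <;> revert hprev hnext hj <;> decide
    · exact absurd (Fin.image_range_add_eq_univ a hn) hne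

lemma mem_Nset_iff {c : Fin 5 → ℤ} {m : ℤ × ℤ} {i : Fin 7} :
    i ∈ Nset c m ↔ (rayForm i).1 * m.1 + (rayForm i).2 * m.2 + cExt c i < 0 := by
  simp [Nset]

lemma lower_bounds_of_cohomologyFree {c : Fin 5 → ℤ} (hc : CohomologyFree c) (hc4 : c 4 = 3) :
    2 < c 0 ∧ 6 < c 1 ∧ 10 < c 2 ∧ 4 < c 3 := by
  obtain ⟨hint, hne⟩ := hc (4, 2) (-1) (Or.inr rfl)
  have hgap : Nset ((-1 : ℤ) • c) (4, 2) = Finset.univ.erase 5 := by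
    refine hint.eq_erase_of_gap hne ?_ ?_ ?_ <;> simp [mem_Nset_iff, rayForm, cExt, hc4]
  have hmem (i : Fin 7) (hi : i ≠ 5) : i ∈ Nset ((-1 : ℤ) • c) (4, 2) :=
    hgap ▸ Finset.mem_erase.mpr ⟨hi, Finset.mem_univ i⟩
  refine ⟨?_, ?_, ?_, ?_⟩
  · simpa [mem_Nset_iff, rayForm, cExt] using hmem 0 (by decide)
  · simpa [mem_Nset_iff, rayForm, cExt] using hmem 1 (by decide)
  · simpa [mem_Nset_iff, rayForm, cExt] using hmem 2 (by decide)
  · simpa [mem_Nset_iff, rayForm, cExt] using hmem 3 (by decide)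

lemma Nset_neg_eq_univ {c : Fin 5 → ℤ} (h0 : 2 < c 0) (h1 : 5 < c 1) (h2 : 8 < c 2)
    (h3 : 3 < c 3) (h4 : 1 < c 4) : Nset ((-1 : ℤ) • c) (3, 1) = Finset.univ := by
  refine Finset.eq_univ_of_forall fun i => ?_
  fin_cases i <;> simp [mem_Nset_iff, rayForm, cExt] <;> omega

/-- There is no cohomology-free vector with `c₅ = 3`. -/
theorem no_cohomologyFree_c5_eq_three :
    ¬ ∃ c : Fin 5 → ℤ, CohomologyFree c ∧ c 4 = 3 := by
  rintro ⟨c, hc, hc4⟩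
  obtain ⟨h0, h1, h2, h3⟩ := lower_bounds_of_cohomologyFree hc hc4
  exact (hc (3, 1) (-1) (Or.inr rfl)).2
    (Nset_neg_eq_univ h0 (by omega) (by omega) (by omega) (by omega))
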